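/- In the downward XOR system, where X₁, X₂, Y₂ are i.i.d. uniformly distributed Boolean random variables and Y₁ = X₁ XOR X₂: the transfer entropies satisfy I(X₂; Y₁ | X₁) = 1 bit and I(X₁; Y₂ | X₂) = 0; hence the unnormalised causal density uCD = I(X₁; Y₂ | X₂) + I(X₂; Y₁ | X₁) equals 1 bit. -/
import Mathlib


open scoped BigOperators

namespace PhiID

variable {Ω : Type*} [Fintype Ω]

/-- `P` is a probability mass function on the finite sample space `Ω`. -/
def IsPMF (P : Ω → ℝ) : Prop :=
  (∀ ω, 0 ≤ P ω) ∧ ∑ ω, P ω = 1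

/-- Probability that the random variable `X` takes the value `a`. -/
noncomputable def prob (P : Ω → ℝ) {α : Type*} [DecidableEq α] (X : Ω → α) (a : α) : ℝ :=
  ∑ ω, if X ω = a then P ω else 0

/-- Shannon entropy (in bits) of the random variable `X`. -/
noncomputable def entropy (P : Ω → ℝ) {α : Type*} [Fintype α] [DecidableEq α]
    (X : Ω → α) : ℝ :=
  -∑ a, prob P X a * Real.logb 2 (prob P X a)

/-- Conditional Shannon entropy (in bits) `H(X | Z)`. -/
noncomputable def condEntropy (P : Ω → ℝ) {α β : Type*} [Fintype α] [DecidableEq α]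
    [Fintype β] [DecidableEq β] (X : Ω → α) (Z : Ω → β) : ℝ :=
  entropy P (fun ω => (X ω, Z ω)) - entropy P Z

/-- Mutual information (in bits) `I(X; Y) = H(X) + H(Y) - H(X,Y)`. -/
noncomputable def mutualInfo (P : Ω → ℝ) {α β : Type*} [Fintype α] [DecidableEq α]
    [Fintype β] [DecidableEq β] (X : Ω → α) (Y : Ω → β) : ℝ :=
  entropy P X + entropy P Y - entropy P (fun ω => (X ω, Y ω))

/-- Conditional mutual information (in bits)
`I(X; Y | Z) = H(X,Z) + H(Y,Z) - H(X,Y,Z) - H(Z)`. -/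
noncomputable def condMutualInfo (P : Ω → ℝ) {α β γ : Type*} [Fintype α] [DecidableEq α]
    [Fintype β] [DecidableEq β] [Fintype γ] [DecidableEq γ]
    (X : Ω → α) (Y : Ω → β) (Z : Ω → γ) : ℝ :=
  entropy P (fun ω => (X ω, Z ω)) + entropy P (fun ω => (Y ω, Z ω))
    - entropy P (fun ω => (X ω, Y ω, Z ω)) - entropy P Z

end PhiID

open PhiID

section AuxProof

open PhiID

lemma prob_comp {Ω : Type*} [Fintype Ω] (P : Ω → ℝ) {α β : Type*} [Fintype α]
    [DecidableEq α] [DecidableEq β] (T : Ω → α) (g : α → β) (b : β) :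
    prob P (fun ω => g (T ω)) b = ∑ a, if g a = b then prob P T a else 0 := by
  classical
  unfold prob
  calc ∑ ω, (if g (T ω) = b then P ω else 0)
      = ∑ ω, ∑ a, if a = T ω then (if g a = b then P ω else 0) else 0 := by
        refine Finset.sum_congr rfl fun ω _ => ?_
        rw [Finset.sum_ite_eq']
        simp
    _ = ∑ a, ∑ ω, if a = T ω then (if g a = b then P ω else 0) else 0 := Finset.sum_comm
    _ = ∑ a, if g a = b then ∑ ω, if T ω = a then P ω else 0 else 0 := by
        refine Finset.sum_congr rfl fun a _ => ?_
        by_cases h : g a = b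
        · simp only [h, if_true]
          refine Finset.sum_congr rfl fun ω _ => ?_
          by_cases hT : T ω = a
          · simp [hT]
          · rw [if_neg hT, if_neg (fun h' => hT h'.symm)]
        · simp only [h, if_false]
          refine Finset.sum_eq_zero fun ω _ => ?_
          by_cases hT : T ω = a
          · simp [hT, h]
          · rw [if_neg (fun h' => hT h'.symm)]

lemma logb_two_half : Real.logb 2 (1/2 : ℝ) = -1 := by
  rw [show (1/2:ℝ) = ((2:ℝ)^(1:ℕ))⁻¹ by norm_num, Real.logb_inv, Real.logb_pow,
    Real.logb_self_eq_one (by norm_num)]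
  norm_num

lemma logb_two_quarter : Real.logb 2 (1/4 : ℝ) = -2 := by
  rw [show (1/4:ℝ) = ((2:ℝ)^(2:ℕ))⁻¹ by norm_num, Real.logb_inv, Real.logb_pow,
    Real.logb_self_eq_one (by norm_num)]
  norm_num

lemma logb_two_eighth : Real.logb 2 (1/8 : ℝ) = -3 := by
  rw [show (1/8:ℝ) = ((2:ℝ)^(3:ℕ))⁻¹ by norm_num, Real.logb_inv, Real.logb_pow,
    Real.logb_self_eq_one (by norm_num)]
  norm_num

lemma entropy_comp' {Ω : Type*} [Fintype Ω] (P : Ω → ℝ) (T : Ω → Bool × Bool × Bool)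
    (hT : ∀ t, prob P T t = 1/8) {α : Type*} [Fintype α] [DecidableEq α]
    (g : Bool × Bool × Bool → α) (V : Ω → α) (hV : ∀ ω, V ω = g (T ω)) :
    entropy P V =
      -∑ a, (∑ t, if g t = a then (1/8:ℝ) else 0) *
        Real.logb 2 (∑ t, if g t = a then (1/8:ℝ) else 0) := by
  have hVe : V = fun ω => g (T ω) := funext hV
  subst hVe
  unfold entropy
  congr 1
  refine Finset.sum_congr rfl fun a _ => ?_
  rw [prob_comp P T g a]
  simp only [hT]

end AuxProof


/-- **Downward XOR system: transfer entropies and causal density.**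
If `X₁, X₂, Y₂` are i.i.d. uniformly distributed Boolean random variables
(i.e. their joint distribution is uniform on `Bool³`) and `Y₁ = X₁ XOR X₂`,
then the transfer entropies satisfy `I(X₂; Y₁ | X₁) = 1` bit and
`I(X₁; Y₂ | X₂) = 0`; hence the unnormalised causal density
`uCD = I(X₁; Y₂ | X₂) + I(X₂; Y₁ | X₁)` equals `1` bit. -/
theorem downward_xor_causal_density
    {Ω : Type*} [Fintype Ω] (P : Ω → ℝ) (hP : IsPMF P)
    (X₁ X₂ Y₁ Y₂ : Ω → Bool)
    (hiid : ∀ a b c : Bool, prob P (fun ω => (X₁ ω, X₂ ω, Y₂ ω)) (a, b, c) = 1/8)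
    (hY₁ : ∀ ω, Y₁ ω = Bool.xor (X₁ ω) (X₂ ω)) :
    condMutualInfo P X₂ Y₁ X₁ = 1 ∧
    condMutualInfo P X₁ Y₂ X₂ = 0 ∧
    condMutualInfo P X₁ Y₂ X₂ + condMutualInfo P X₂ Y₁ X₁ = 1 := by
  set T : Ω → Bool × Bool × Bool := fun ω => (X₁ ω, X₂ ω, Y₂ ω) with hTdef
  have hT : ∀ t, prob P T t = 1/8 := by
    rintro ⟨a, b, c⟩; exact hiid a b c
  have e1 : entropy P (fun ω => (X₂ ω, X₁ ω)) = 2 := by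
    rw [entropy_comp' P T hT (fun t => (t.2.1, t.1)) _ (fun ω => rfl)]
    simp only [Fintype.sum_prod_type, Fintype.sum_bool]
    norm_num [logb_two_quarter]
  have e2 : entropy P (fun ω => (Y₁ ω, X₁ ω)) = 2 := by
    rw [entropy_comp' P T hT (fun t => (Bool.xor t.1 t.2.1, t.1)) _
      (fun ω => by rw [hY₁ ω])]
    simp only [Fintype.sum_prod_type, Fintype.sum_bool]
    norm_num [logb_two_quarter]
  have e3 : entropy P (fun ω => (X₂ ω, Y₁ ω, X₁ ω)) = 2 := by
    rw [entropy_comp' P T hT (fun t => (t.2.1, Bool.xor t.1 t.2.1, t.1)) _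
      (fun ω => by rw [hY₁ ω])]
    simp only [Fintype.sum_prod_type, Fintype.sum_bool]
    norm_num [logb_two_quarter]
  have e4 : entropy P X₁ = 1 := by
    rw [entropy_comp' P T hT (fun t => t.1) X₁ (fun ω => rfl)]
    simp only [Fintype.sum_prod_type, Fintype.sum_bool]
    norm_num [logb_two_half]
  have e5 : entropy P X₂ = 1 := by
    rw [entropy_comp' P T hT (fun t => t.2.1) X₂ (fun ω => rfl)]
    simp only [Fintype.sum_prod_type, Fintype.sum_bool]
    norm_num [logb_two_half]
  have e6 : entropy P (fun ω => (X₁ ω, X₂ ω)) = 2 := by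
    rw [entropy_comp' P T hT (fun t => (t.1, t.2.1)) _ (fun ω => rfl)]
    simp only [Fintype.sum_prod_type, Fintype.sum_bool]
    norm_num [logb_two_quarter]
  have e7 : entropy P (fun ω => (Y₂ ω, X₂ ω)) = 2 := by
    rw [entropy_comp' P T hT (fun t => (t.2.2, t.2.1)) _ (fun ω => rfl)]
    simp only [Fintype.sum_prod_type, Fintype.sum_bool]
    norm_num [logb_two_quarter]
  have e8 : entropy P (fun ω => (X₁ ω, Y₂ ω, X₂ ω)) = 3 := by
    rw [entropy_comp' P T hT (fun t => (t.1, t.2.2, t.2.1)) _ (fun ω => rfl)]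
    simp only [Fintype.sum_prod_type, Fintype.sum_bool]
    norm_num [logb_two_eighth]
  have c1 : condMutualInfo P X₂ Y₁ X₁ = 1 := by
    unfold condMutualInfo
    rw [e1, e2, e3, e4]; norm_num
  have c2 : condMutualInfo P X₁ Y₂ X₂ = 0 := by
    unfold condMutualInfo
    rw [e6, e7, e8, e5]; norm_num
  exact ⟨c1, c2, by rw [c1, c2]; norm_num⟩
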